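/- arXiv:2008.10595 — 5 statements merged into one kernel-verified Lean document; each statement's English description precedes it below -/
import Mathlib

section
/- Let (X, μ) be a probability space and let C ⊆ L²(X, μ) be the set of functions of the form Σᵢ tᵢ c_{Yᵢ} + z, where tᵢ ≥ 0 sum to 1, each c_{Yᵢ} is the indicator of a measurable set Yᵢ belonging to a fixed family 𝒮 of measurable sets, and z ≥ 0 is bounded measurable. If the constant function ε does not belong to the closure of C in L², then there exists a nonnegative W ∈ L²(X, μ) such that ∫_X W · ε dμ < ∫_Y W dμ for every Y ∈ 𝒮. -/
/-!
Hahn–Banach together with the Riesz representation separates the constant `ε` from the closed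
convex set `closure C` by some `w ∈ L²`: `⟪w, ε⟫ < u < ⟪w, c⟫` for all `c ∈ C`. Since `C` is
stable under adding `τ • 𝟙ₛ` for every `τ ≥ 0` and measurable `s`, letting `τ → ∞` gives
`∫ₛ w ≥ 0` for all `s`, so `w ≥ 0` a.e., and `W = max w 0` is the required function.
-/

open MeasureTheory

theorem Fin.sum_addCases_mul_comp {R α : Type*} [CommSemiring R] {n m : ℕ} (a b : R)
    (t : Fin n → R) (s : Fin m → R) (Y : Fin n → α) (Z : Fin m → α) (φ : α → R) :
    ∑ i, Fin.addCases (fun i => a * t i) (fun j => b * s j) i * φ (Fin.addCases Y Z i) =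
      a * ∑ i, t i * φ (Y i) + b * ∑ j, s j * φ (Z j) := by
  simp [Fin.sum_univ_add, Finset.mul_sum, mul_assoc]

section Separation

variable {E : Type*} [NormedAddCommGroup E] [InnerProductSpace ℝ E] [CompleteSpace E]

theorem exists_inner_separation_of_notMem_closure {s : Set E} (hs : Convex ℝ s) {x : E}
    (hx : x ∉ closure s) : ∃ (w : E) (u : ℝ), inner ℝ w x < u ∧ ∀ y ∈ s, u < inner ℝ w y := by
  obtain ⟨φ, u, hφx, hφs⟩ := geometric_hahn_banach_point_closed hs.closure isClosed_closure hx
  refine ⟨(InnerProductSpace.toDual ℝ E).symm φ, u, ?_, fun y hy => ?_⟩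
  · rwa [InnerProductSpace.toDual_symm_apply]
  · rw [InnerProductSpace.toDual_symm_apply]
    exact hφs y (subset_closure hy)

end Separation

theorem nonneg_of_forall_lt_add_mul {u a b : ℝ} (h : ∀ τ : ℝ, 0 ≤ τ → u < a + τ * b) :
    0 ≤ b := by
  by_contra! hb
  have hua : u < a := by simpa using h 0 le_rfl
  have := h ((a - u) / -b) (div_nonneg (by linarith) (by linarith))
  rw [div_mul_eq_mul_div, div_neg, mul_div_cancel_right₀ _ hb.ne] at this
  linarith

namespace MeasureTheory

variable {X : Type*} [MeasurableSpace X]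

def indicatorMixtureAddBounded (μ : Measure X) (𝒮 : Set (Set X)) : Set (Lp ℝ 2 μ) :=
  {f | ∃ (n : ℕ) (t : Fin n → ℝ) (Y : Fin n → Set X) (z : X → ℝ),
        (∀ i, 0 ≤ t i) ∧ (∑ i, t i = 1) ∧ (∀ i, Y i ∈ 𝒮) ∧
        (∀ x, 0 ≤ z x) ∧ Measurable z ∧ (∃ b : ℝ, ∀ x, z x ≤ b) ∧
        (f : X → ℝ) =ᵐ[μ] fun x => (∑ i, t i * (Y i).indicator (fun _ => (1 : ℝ)) x) + z x}

variable {μ : Measure X} {𝒮 : Set (Set X)}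

theorem L2.ae_nonneg_of_forall_inner_indicatorConstLp_nonneg {w : Lp ℝ 2 μ}
    (h : ∀ s (hs : MeasurableSet s) (hμs : μ s ≠ ⊤),
      0 ≤ inner ℝ w (indicatorConstLp 2 hs hμs (1 : ℝ))) :
    0 ≤ᵐ[μ] w := by
  refine ((Lp.memLp w).aefinStronglyMeasurable two_ne_zero ENNReal.ofNat_ne_top)
    |>.ae_nonneg_of_forall_setIntegral_nonneg
    (fun s _ hμs => integrableOn_Lp_of_measure_ne_top w one_le_two hμs.ne) fun s hs hμs => ?_
  rw [← L2.inner_indicatorConstLp_one hs hμs.ne, real_inner_comm]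
  exact h s hs hμs.ne

theorem convex_indicatorMixtureAddBounded : Convex ℝ (indicatorMixtureAddBounded μ 𝒮) := by
  rintro f ⟨n, t, Y, z, ht0, ht1, hY, hz0, hzm, ⟨bz, hbz⟩, hf⟩
    g ⟨m, s, Z, v, hs0, hs1, hZ, hv0, hvm, ⟨bv, hbv⟩, hg⟩ a b ha hb hab
  refine ⟨n + m, Fin.addCases (fun i => a * t i) (fun j => b * s j), Fin.addCases Y Z,
    fun x => a * z x + b * v x,
    Fin.addCases (fun i => by simpa using mul_nonneg ha (ht0 i))
      (fun j => by simpa using mul_nonneg hb (hs0 j)),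
    by simpa [ht1, hs1, hab] using Fin.sum_addCases_mul_comp a b t s Y Z fun _ => (1 : ℝ),
    Fin.addCases (fun i => by simpa using hY i) (fun j => by simpa using hZ j),
    fun x => add_nonneg (mul_nonneg ha (hz0 x)) (mul_nonneg hb (hv0 x)),
    (hzm.const_mul a).add (hvm.const_mul b),
    ⟨a * bz + b * bv, fun x =>
      add_le_add (mul_le_mul_of_nonneg_left (hbz x) ha) (mul_le_mul_of_nonneg_left (hbv x) hb)⟩, ?_⟩
  filter_upwards [Lp.coeFn_add (a • f) (b • g), Lp.coeFn_smul a f, Lp.coeFn_smul b g, hf, hg]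
    with x hfg haf hbg hfx hgx
  simp only [hfg, Pi.add_apply, haf, hbg, Pi.smul_apply, smul_eq_mul, hfx, hgx,
    Fin.sum_addCases_mul_comp a b t s Y Z fun S => S.indicator (fun _ => (1 : ℝ)) x]
  ring

theorem indicatorConstLp_add_smul_mem_indicatorMixtureAddBounded {Y s : Set X} (h𝒮 : Y ∈ 𝒮)
    (hY : MeasurableSet Y) (hμY : μ Y ≠ ⊤) (hs : MeasurableSet s) (hμs : μ s ≠ ⊤) {τ : ℝ}
    (hτ : 0 ≤ τ) :
    indicatorConstLp 2 hY hμY (1 : ℝ) + τ • indicatorConstLp 2 hs hμs (1 : ℝ) ∈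
      indicatorMixtureAddBounded μ 𝒮 := by
  refine ⟨1, fun _ => 1, fun _ => Y, s.indicator fun _ => τ, fun _ => zero_le_one, by simp,
    fun _ => h𝒮, Set.indicator_nonneg fun _ _ => hτ, measurable_const.indicator hs,
    ⟨τ, Set.indicator_le_self' fun _ _ => hτ⟩, ?_⟩
  filter_upwards
    [Lp.coeFn_add (indicatorConstLp 2 hY hμY (1 : ℝ)) (τ • indicatorConstLp 2 hs hμs 1),
      Lp.coeFn_smul τ (indicatorConstLp 2 hs hμs (1 : ℝ)),
      indicatorConstLp_coeFn (p := 2) (c := (1 : ℝ)) (hs := hY) (hμs := hμY),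
      indicatorConstLp_coeFn (p := 2) (c := (1 : ℝ)) (hs := hs) (hμs := hμs)]
    with x hsum hsmul hYx hsx
  rw [hsum, Pi.add_apply, hsmul, Pi.smul_apply, hYx, hsx]
  by_cases hx : x ∈ s <;> simp [hx]

end MeasureTheory

theorem stmt6_general {X : Type*} [MeasurableSpace X] (μ : Measure X) [IsProbabilityMeasure μ]
    (𝒮 : Set (Set X)) (h𝒮ne : 𝒮.Nonempty) (h𝒮meas : ∀ Y ∈ 𝒮, MeasurableSet Y)
    (ε : ℝ)
    (C : Set (Lp ℝ 2 μ))
    (hCdef : ∀ f : Lp ℝ 2 μ, f ∈ C ↔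
      ∃ (n : ℕ) (t : Fin n → ℝ) (Y : Fin n → Set X) (z : X → ℝ),
        (∀ i, 0 ≤ t i) ∧ (∑ i, t i = 1) ∧ (∀ i, Y i ∈ 𝒮) ∧
        (∀ x, 0 ≤ z x) ∧ Measurable z ∧ (∃ b : ℝ, ∀ x, z x ≤ b) ∧
        (f : X → ℝ) =ᵐ[μ] fun x => (∑ i, t i * (Y i).indicator (fun _ => (1:ℝ)) x) + z x)
    (hnot : ¬ ∃ f ∈ closure C, (f : X → ℝ) =ᵐ[μ] fun _ => ε) :
    ∃ W : X → ℝ, (∀ x, 0 ≤ W x) ∧ MemLp W 2 μ ∧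
      ∀ Y ∈ 𝒮, ∫ x, W x * ε ∂μ < ∫ x in Y, W x ∂μ := by
  obtain rfl : C = indicatorMixtureAddBounded μ 𝒮 := Set.ext hCdef
  set εL := indicatorConstLp 2 MeasurableSet.univ (measure_ne_top μ Set.univ) ε
  have hεL : εL ∉ closure (indicatorMixtureAddBounded μ 𝒮) := fun h =>
    hnot ⟨εL, h, by
      simpa only [Set.indicator_univ] using (indicatorConstLp_coeFn : (εL : X → ℝ) =ᵐ[μ] _)⟩
  obtain ⟨w, u, hwε, hwC⟩ :=
    exists_inner_separation_of_notMem_closure convex_indicatorMixtureAddBounded hεL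
  have hwY (Y : Set X) (hY : Y ∈ 𝒮) {s : Set X} (hs : MeasurableSet s) {τ : ℝ} (hτ : 0 ≤ τ) :
      u < inner ℝ w (indicatorConstLp 2 (h𝒮meas Y hY) (measure_ne_top μ Y) 1 +
        τ • indicatorConstLp 2 hs (measure_ne_top μ s) 1) :=
    hwC _ (indicatorConstLp_add_smul_mem_indicatorMixtureAddBounded hY (h𝒮meas Y hY)
      (measure_ne_top μ Y) hs (measure_ne_top μ s) hτ)
  obtain ⟨Y₀, hY₀⟩ := h𝒮ne
  have hw : 0 ≤ᵐ[μ] w := L2.ae_nonneg_of_forall_inner_indicatorConstLp_nonneg fun s hs hμs =>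
    nonneg_of_forall_lt_add_mul fun τ hτ => by
      simpa [inner_add_right, inner_smul_right] using hwY Y₀ hY₀ hs hτ
  have hWw : (fun x => max (w x) 0) =ᵐ[μ] w := hw.mono fun x hx => max_eq_left hx
  refine ⟨fun x => max (w x) 0, fun x => le_max_right _ _, (Lp.memLp w).ae_eq hWw.symm,
    fun Y hY => ?_⟩
  calc ∫ x, max (w x) 0 * ε ∂μ = inner ℝ w εL := by
        rw [real_inner_comm, L2.inner_indicatorConstLp_eq_setIntegral_inner, Measure.restrict_univ]
        refine integral_congr_ae (hWw.mono fun x hx => ?_)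
        simp [hx, mul_comm]
    _ < u := hwε
    _ < inner ℝ w (indicatorConstLp 2 (h𝒮meas Y hY) (measure_ne_top μ Y) 1) := by
        simpa using hwY Y hY MeasurableSet.empty le_rfl
    _ = ∫ x in Y, max (w x) 0 ∂μ := by
        rw [real_inner_comm, L2.inner_indicatorConstLp_one]
        exact integral_congr_ae (ae_restrict_of_ae hWw.symm)

/-- Hahn–Banach separation in `L²`: if the constant function `ε` is not in the closure of
the convex set `C` of functions of the form `Σᵢ tᵢ·𝟙_{Yᵢ} + z` (`Yᵢ ∈ 𝒮`, `tᵢ ≥ 0`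
summing to `1`, `z ≥ 0` bounded measurable), then there is a nonnegative `W ∈ L²` with
`∫ W·ε dμ < ∫_Y W dμ` for every `Y ∈ 𝒮`. -/
theorem stmt6 {X : Type*} [MeasurableSpace X] (μ : Measure X) [IsProbabilityMeasure μ]
    (𝒮 : Set (Set X)) (h𝒮ne : 𝒮.Nonempty) (h𝒮meas : ∀ Y ∈ 𝒮, MeasurableSet Y)
    (ε : ℝ) (hε : 0 < ε)
    (C : Set (Lp ℝ 2 μ))
    (hCdef : ∀ f : Lp ℝ 2 μ, f ∈ C ↔
      ∃ (n : ℕ) (t : Fin n → ℝ) (Y : Fin n → Set X) (z : X → ℝ),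
        (∀ i, 0 ≤ t i) ∧ (∑ i, t i = 1) ∧ (∀ i, Y i ∈ 𝒮) ∧
        (∀ x, 0 ≤ z x) ∧ Measurable z ∧ (∃ b : ℝ, ∀ x, z x ≤ b) ∧
        (f : X → ℝ) =ᵐ[μ] fun x => (∑ i, t i * (Y i).indicator (fun _ => (1:ℝ)) x) + z x)
    (hnot : ¬ ∃ f ∈ closure C, (f : X → ℝ) =ᵐ[μ] fun _ => ε) :
    ∃ W : X → ℝ, (∀ x, 0 ≤ W x) ∧ MemLp W 2 μ ∧
      ∀ Y ∈ 𝒮, ∫ x, W x * ε ∂μ < ∫ x in Y, W x ∂μ :=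
  stmt6_general μ 𝒮 h𝒮ne h𝒮meas ε C hCdef hnot
end

section
/- Let G be a finite graph with vertex degrees at most d and let Φ be a fractional K-partition of G: a function assigning a nonnegative weight Φ(A) to each connected subset A ⊆ V(G) with |A| ≤ K, such that Σ_{A ∋ x} Φ(A) = 1 for every vertex x. For x ∈ V(G), define p(x) ∈ Prob(V(G)) by p(x)(y) = Σ_{A ∋ x, y∈A} Φ(A)/|A|, and define ∂Φ(x) = Σ_{A: x ∈ ∂A} Φ(A), where ∂A is the set of vertices of A adjacent to some vertex outside A. If x ~ y are adjacent vertices, then ‖p(x) − p(y)‖₁ ≤ ∂Φ(x) + ∂Φ(y). -/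
/-! Only the sets containing exactly one of `x`, `y` contribute to `p x - p y`. Such a set `A`
carries `Φ A / |A|` at each of its `|A|` points, hence `Φ A` in total, and since it separates
the adjacent vertices `x` and `y`, whichever of them it contains lies in its inner boundary. -/

open Finset

def innerBoundary {V : Type*} [Fintype V] [DecidableEq V]
    (G : SimpleGraph V) [DecidableRel G.Adj] (A : Finset V) : Finset V :=
  A.filter (fun v => ∃ w, w ∉ A ∧ G.Adj v w)

lemma Finset.abs_sum_sub_sum_le_sum_sdiff_add_sum_sdiff {ι M : Type*} [DecidableEq ι]
    [AddCommGroup M] [LinearOrder M] [IsOrderedAddMonoid M] {f : ι → M} (hf : ∀ i, 0 ≤ f i) (s t : Finset ι) :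
    |∑ i ∈ s, f i - ∑ i ∈ t, f i| ≤ ∑ i ∈ s \ t, f i + ∑ i ∈ t \ s, f i := by
  rw [← sum_sdiff_sub_sum_sdiff]
  refine (abs_sub _ _).trans_eq ?_
  rw [abs_of_nonneg (sum_nonneg fun i _ => hf i), abs_of_nonneg (sum_nonneg fun i _ => hf i)]

section FractionalPartition

variable {V : Type*} [Fintype V] [DecidableEq V]

lemma filter_mem_mem_sdiff_filter_mem_mem (x y z : V) :
    univ.filter (fun A : Finset V => x ∈ A ∧ z ∈ A) \
        univ.filter (fun A : Finset V => y ∈ A ∧ z ∈ A) =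
      univ.filter (fun A : Finset V => (x ∈ A ∧ y ∉ A) ∧ z ∈ A) := by
  ext A
  simp only [mem_sdiff, mem_filter, mem_univ, true_and]
  tauto

lemma sum_sum_filter_mem_div_card (c : Finset V → Prop) [DecidablePred c]
    (hc : ∀ A, c A → A.Nonempty) (Φ : Finset V → ℝ) :
    ∑ z : V, ∑ A ∈ univ.filter (fun A => c A ∧ z ∈ A), Φ A / A.card =
      ∑ A ∈ univ.filter c, Φ A := by
  simp only [sum_filter, ite_and]
  rw [sum_comm]
  refine sum_congr rfl fun A _ => ?_
  split_ifs with hA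
  · rw [sum_ite_mem, univ_inter, sum_const, nsmul_eq_mul]
    have : (A.card : ℝ) ≠ 0 := Nat.cast_ne_zero.mpr (hc A hA).card_ne_zero
    field_simp
  · exact sum_const_zero

lemma mem_innerBoundary_of_adj {G : SimpleGraph V} [DecidableRel G.Adj] {A : Finset V}
    {x y : V} (hxy : G.Adj x y) (hx : x ∈ A) (hy : y ∉ A) : x ∈ innerBoundary G A :=
  mem_filter.mpr ⟨hx, y, hy, hxy⟩

lemma sum_filter_cut_le_sum_filter_innerBoundary (G : SimpleGraph V) [DecidableRel G.Adj]
    {Φ : Finset V → ℝ} (hΦ0 : ∀ A, 0 ≤ Φ A) {x y : V} (hxy : G.Adj x y) :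
    ∑ A ∈ univ.filter (fun A : Finset V => x ∈ A ∧ y ∉ A), Φ A ≤
      ∑ A ∈ univ.filter (fun A : Finset V => x ∈ innerBoundary G A), Φ A := by
  refine sum_le_sum_of_subset_of_nonneg (fun A hA => ?_) fun A _ _ => hΦ0 A
  simp only [mem_filter, mem_univ, true_and] at hA ⊢
  exact mem_innerBoundary_of_adj hxy hA.1 hA.2

end FractionalPartition

theorem stmt8_general {V : Type*} [Fintype V] [DecidableEq V]
    (G : SimpleGraph V) [DecidableRel G.Adj]
    (Φ : Finset V → ℝ) (hΦ0 : ∀ A, 0 ≤ Φ A)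
    (p : V → V → ℝ)
    (hp : ∀ x y : V,
      p x y = ∑ A ∈ univ.filter (fun A : Finset V => x ∈ A ∧ y ∈ A), Φ A / A.card)
    (x y : V) (hxy : G.Adj x y) :
    ∑ z : V, |p x z - p y z| ≤
      (∑ A ∈ univ.filter (fun A : Finset V => x ∈ innerBoundary G A), Φ A) +
      (∑ A ∈ univ.filter (fun A : Finset V => y ∈ innerBoundary G A), Φ A) := by
  have hw : ∀ A : Finset V, 0 ≤ Φ A / A.card := fun A => div_nonneg (hΦ0 A) A.card.cast_nonneg
  calc ∑ z : V, |p x z - p y z|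
      ≤ ∑ z : V, (∑ A ∈ univ.filter (fun A => (x ∈ A ∧ y ∉ A) ∧ z ∈ A), Φ A / A.card +
          ∑ A ∈ univ.filter (fun A => (y ∈ A ∧ x ∉ A) ∧ z ∈ A), Φ A / A.card) := by
        refine sum_le_sum fun z _ => ?_
        rw [hp, hp, ← filter_mem_mem_sdiff_filter_mem_mem, ← filter_mem_mem_sdiff_filter_mem_mem]
        exact abs_sum_sub_sum_le_sum_sdiff_add_sum_sdiff hw _ _
    _ = ∑ A ∈ univ.filter (fun A : Finset V => x ∈ A ∧ y ∉ A), Φ A +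
          ∑ A ∈ univ.filter (fun A : Finset V => y ∈ A ∧ x ∉ A), Φ A := by
        rw [sum_add_distrib, sum_sum_filter_mem_div_card _ (fun A h => ⟨x, h.1⟩),
          sum_sum_filter_mem_div_card _ (fun A h => ⟨y, h.1⟩)]
    _ ≤ _ := add_le_add (sum_filter_cut_le_sum_filter_innerBoundary G hΦ0 hxy)
          (sum_filter_cut_le_sum_filter_innerBoundary G hΦ0 hxy.symm)

/-- For a fractional `K`-partition `Φ` and the associated probability assignment
`p(x)(y) = Σ_{A ∋ x,y} Φ(A)/|A|`, adjacent vertices satisfy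
`‖p(x) − p(y)‖₁ ≤ ∂Φ(x) + ∂Φ(y)`. -/
theorem stmt8 {V : Type*} [Fintype V] [DecidableEq V]
    (G : SimpleGraph V) [DecidableRel G.Adj]
    (d K : ℕ) (hdeg : ∀ v, G.degree v ≤ d) (hK : 1 ≤ K)
    (Φ : Finset V → ℝ) (hΦ0 : ∀ A, 0 ≤ Φ A)
    (hsupp : ∀ A, Φ A ≠ 0 → A.card ≤ K ∧ (G.induce (↑A : Set V)).Connected)
    (hpart : ∀ x : V, ∑ A ∈ univ.filter (fun A : Finset V => x ∈ A), Φ A = 1)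
    (p : V → V → ℝ)
    (hp : ∀ x y : V,
      p x y = ∑ A ∈ univ.filter (fun A : Finset V => x ∈ A ∧ y ∈ A), Φ A / A.card)
    (x y : V) (hxy : G.Adj x y) :
    ∑ z : V, |p x z - p y z| ≤
      (∑ A ∈ univ.filter (fun A : Finset V => x ∈ innerBoundary G A), Φ A) +
      (∑ A ∈ univ.filter (fun A : Finset V => y ∈ innerBoundary G A), Φ A) :=
  stmt8_general G Φ hΦ0 p hp x y hxy
end

section
/- Let G be a finite graph with maximum degree at most d and Φ a fractional K-partition with ∂Φ(x) ≤ ε for all x. Define p : V(G) → Prob(V(G)) by p(x)(y) = Σ_{A ∋ x,y} Φ(A)/|A|. Then Supp(p(x)) ⊆ B_K(x) (the ball of radius K around x in the graph metric), and for every vertex x, Σ_{y ~ x} ‖p(x) − p(y)‖₁ ≤ 2εd. -/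
open Finset

/-!
The point `x` is spread uniformly over each piece `A ∋ x`, with weight `Φ(A)`. Pieces are
connected of size at most `K`, which gives the support bound. For neighbours `x ~ y`, the
pieces containing both contribute identically to `p(x)` and `p(y)`; every other piece
contributes total mass `Φ(A)` to one side only, and it separates `x` from `y`, so it has
`x` or `y` on its inner boundary. Hence `‖p(x) − p(y)‖₁ ≤ ∂Φ(x) + ∂Φ(y) ≤ 2ε`.
-/

namespace SimpleGraph

variable {V : Type*} {G : SimpleGraph V}

theorem reachable_and_dist_lt_card_of_connected_induce {A : Finset V}
    (hA : (G.induce (A : Set V)).Connected) {x y : V} (hx : x ∈ A) (hy : y ∈ A) :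
    G.Reachable x y ∧ G.dist x y < A.card := by
  classical
  obtain ⟨w⟩ := hA.preconnected ⟨x, hx⟩ ⟨y, hy⟩
  let q := w.toPath
  let wG := q.1.map (Embedding.induce (A : Set V)).toHom
  have hq : q.1.length < A.card := by
    simpa using q.2.length_lt
  exact ⟨⟨wG⟩, (dist_le wG).trans_lt (by rwa [Walk.length_map])⟩

end SimpleGraph

section BlockAverage

variable {V : Type*} [Fintype V] [DecidableEq V]

noncomputable def blockAverage (Φ : Finset V → ℝ) (x z : V) : ℝ :=
  ∑ A ∈ univ.filter (fun A : Finset V => x ∈ A ∧ z ∈ A), Φ A / A.card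

theorem exists_mem_of_blockAverage_ne_zero {Φ : Finset V → ℝ} {x z : V}
    (h : blockAverage Φ x z ≠ 0) : ∃ A, Φ A ≠ 0 ∧ x ∈ A ∧ z ∈ A := by
  obtain ⟨A, hA, hne⟩ := exists_ne_zero_of_sum_ne_zero h
  exact ⟨A, fun h0 => hne (by simp [h0]), (mem_filter.mp hA).2⟩

theorem sum_ite_mem_div_card_le {c : ℝ} (hc : 0 ≤ c) (A : Finset V) :
    ∑ z, (if z ∈ A then c / A.card else 0) ≤ c := by
  rw [sum_ite_mem, univ_inter, sum_const, nsmul_eq_mul]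
  rcases A.eq_empty_or_nonempty with rfl | hA
  · simpa using hc
  · rw [mul_div_cancel₀ _ (by exact_mod_cast hA.card_pos.ne')]

theorem blockAverage_eq (Φ : Finset V → ℝ) (x z : V) :
    blockAverage Φ x z =
      ∑ A, (if x ∈ A then 1 else 0) * (if z ∈ A then Φ A / A.card else 0) := by
  simp only [blockAverage, sum_filter, ite_and, ite_zero_mul, one_mul]

theorem sum_abs_blockAverage_sub_le {Φ : Finset V → ℝ} (hΦ : ∀ A, 0 ≤ Φ A) (x y : V) :
    ∑ z, |blockAverage Φ x z - blockAverage Φ y z| ≤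
      ∑ A ∈ univ.filter (fun A : Finset V => x ∈ A ∧ y ∉ A), Φ A +
        ∑ A ∈ univ.filter (fun A : Finset V => y ∈ A ∧ x ∉ A), Φ A := by
  let χ : V → Finset V → ℝ := fun u A => if u ∈ A then 1 else 0
  let f : Finset V → V → ℝ := fun A z => if z ∈ A then Φ A / A.card else 0
  have hf : ∀ A z, 0 ≤ f A z := fun A z => by
    simp only [f]; split_ifs <;> positivity [hΦ A]
  have hcoeff : ∀ A, |χ x A - χ y A| * Φ A =
      (if x ∈ A ∧ y ∉ A then Φ A else 0) + (if y ∈ A ∧ x ∉ A then Φ A else 0) := by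
    intro A; simp only [χ]; split_ifs <;> simp_all
  calc ∑ z, |blockAverage Φ x z - blockAverage Φ y z|
      = ∑ z, |∑ A, (χ x A - χ y A) * f A z| := by
        simp only [blockAverage_eq, ← sum_sub_distrib, sub_mul]; rfl
    _ ≤ ∑ z, ∑ A, |χ x A - χ y A| * f A z := by
        gcongr with z
        refine (abs_sum_le_sum_abs _ _).trans_eq (sum_congr rfl fun A _ => ?_)
        rw [abs_mul, abs_of_nonneg (hf A z)]
    _ = ∑ A, |χ x A - χ y A| * ∑ z, f A z := by
        rw [sum_comm]; simp only [mul_sum]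
    _ ≤ ∑ A, |χ x A - χ y A| * Φ A := by
        gcongr with A; exact sum_ite_mem_div_card_le (hΦ A) A
    _ = _ := by simp only [hcoeff, sum_add_distrib, sum_filter]

end BlockAverage

theorem sum_filter_mem_notMem_le_sum_innerBoundary {V : Type*} [Fintype V] [DecidableEq V]
    (G : SimpleGraph V) [DecidableRel G.Adj] {Φ : Finset V → ℝ} (hΦ : ∀ A, 0 ≤ Φ A)
    {x y : V} (hxy : G.Adj x y) :
    ∑ A ∈ univ.filter (fun A : Finset V => x ∈ A ∧ y ∉ A), Φ A ≤
      ∑ A ∈ univ.filter (fun A : Finset V => x ∈ innerBoundary G A), Φ A := by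
  refine sum_le_sum_of_subset_of_nonneg (fun A hA => ?_) fun A _ _ => hΦ A
  simp only [mem_filter, mem_univ, true_and, innerBoundary] at hA ⊢
  exact ⟨hA.1, y, hA.2, hxy⟩

theorem stmt9_general {V : Type*} [Fintype V] [DecidableEq V]
    (G : SimpleGraph V) [DecidableRel G.Adj]
    (d K : ℕ) (hdeg : ∀ v, G.degree v ≤ d)
    (ε : ℝ)
    (Φ : Finset V → ℝ) (hΦ0 : ∀ A, 0 ≤ Φ A)
    (hsupp : ∀ A, Φ A ≠ 0 → A.card ≤ K ∧ (G.induce (↑A : Set V)).Connected)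
    (hbd : ∀ x : V,
      (∑ A ∈ univ.filter (fun A : Finset V => x ∈ innerBoundary G A), Φ A) ≤ ε)
    (p : V → V → ℝ)
    (hp : ∀ x y : V,
      p x y = ∑ A ∈ univ.filter (fun A : Finset V => x ∈ A ∧ y ∈ A), Φ A / A.card) :
    (∀ x y : V, p x y ≠ 0 → G.Reachable x y ∧ G.dist x y ≤ K) ∧
    (∀ x : V, ∑ y ∈ G.neighborFinset x, ∑ z : V, |p x z - p y z| ≤ 2 * ε * d) := by
  obtain rfl : p = blockAverage Φ := funext₂ hp
  refine ⟨fun x y hxy => ?_, fun x => ?_⟩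
  · obtain ⟨A, hΦA, hx, hy⟩ := exists_mem_of_blockAverage_ne_zero hxy
    obtain ⟨hcard, hconn⟩ := hsupp A hΦA
    obtain ⟨hreach, hdist⟩ :=
      SimpleGraph.reachable_and_dist_lt_card_of_connected_induce hconn hx hy
    exact ⟨hreach, by omega⟩
  · have hε : 0 ≤ ε := (sum_nonneg fun A _ => hΦ0 A).trans (hbd x)
    have hedge : ∀ y ∈ G.neighborFinset x,
        ∑ z, |blockAverage Φ x z - blockAverage Φ y z| ≤ 2 * ε := fun y hy => by
      rw [SimpleGraph.mem_neighborFinset] at hy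
      linarith [sum_abs_blockAverage_sub_le hΦ0 x y,
        (sum_filter_mem_notMem_le_sum_innerBoundary G hΦ0 hy).trans (hbd x),
        (sum_filter_mem_notMem_le_sum_innerBoundary G hΦ0 hy.symm).trans (hbd y)]
    calc ∑ y ∈ G.neighborFinset x, ∑ z, |blockAverage Φ x z - blockAverage Φ y z|
        ≤ G.degree x * (2 * ε) := by
          simpa [SimpleGraph.card_neighborFinset_eq_degree] using sum_le_card_nsmul _ _ _ hedge
      _ ≤ 2 * ε * d := by nlinarith [(Nat.cast_le (α := ℝ)).mpr (hdeg x)]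

/-- If `Φ` is a fractional `K`-partition with `∂Φ(x) ≤ ε` everywhere, then
`p(x)(y) = Σ_{A ∋ x,y} Φ(A)/|A|` is supported in the `K`-ball around `x` and
`Σ_{y ~ x} ‖p(x) − p(y)‖₁ ≤ 2εd` for every `x`. -/
theorem stmt9 {V : Type*} [Fintype V] [DecidableEq V]
    (G : SimpleGraph V) [DecidableRel G.Adj]
    (d K : ℕ) (hdeg : ∀ v, G.degree v ≤ d) (hK : 1 ≤ K)
    (ε : ℝ) (hε : 0 < ε)
    (Φ : Finset V → ℝ) (hΦ0 : ∀ A, 0 ≤ Φ A)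
    (hsupp : ∀ A, Φ A ≠ 0 → A.card ≤ K ∧ (G.induce (↑A : Set V)).Connected)
    (hpart : ∀ x : V, ∑ A ∈ univ.filter (fun A : Finset V => x ∈ A), Φ A = 1)
    (hbd : ∀ x : V,
      (∑ A ∈ univ.filter (fun A : Finset V => x ∈ innerBoundary G A), Φ A) ≤ ε)
    (p : V → V → ℝ)
    (hp : ∀ x y : V,
      p x y = ∑ A ∈ univ.filter (fun A : Finset V => x ∈ A ∧ y ∈ A), Φ A / A.card) :
    (∀ x y : V, p x y ≠ 0 → G.Reachable x y ∧ G.dist x y ≤ K) ∧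
    (∀ x : V, ∑ y ∈ G.neighborFinset x, ∑ z : V, |p x z - p y z| ≤ 2 * ε * d) :=
  stmt9_general G d K hdeg ε Φ hΦ0 hsupp hbd p hp
end

section
/- Let G be a finite graph with maximum degree d, and let t₁,...,tₙ ≥ 0 with Σtᵢ = 1 be weights on K-separators Y₁,...,Yₙ of G. Let Φ = Σᵢ tᵢ Φ_{Yᵢ} be the associated fractional K-partition. Then for every ε > 0, |{x : ∂Φ(x) ≥ ε}| ≤ (d+1) · |{x : Σ_{i : x ∈ Yᵢ} tᵢ ≥ ε/(d+1)}|. -/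
open Finset

/-- `A` is (the vertex set of) a connected component of the induced graph on `V ∖ Y`. -/
def isCompOff {V : Type*} [Fintype V] [DecidableEq V]
    (G : SimpleGraph V) (Y : Finset V) (A : Finset V) : Prop :=
  ∃ c : (G.induce ((↑Y : Set V)ᶜ)).ConnectedComponent,
    (↑A : Set V) = Subtype.val '' c.supp

open Classical in
/-- The `K`-partition associated to a `K`-separator `Y`. -/
noncomputable def PhiY {V : Type*} [Fintype V] [DecidableEq V]
    (G : SimpleGraph V) (Y : Finset V) (A : Finset V) : ℝ :=
  if (∃ y ∈ Y, A = {y}) ∨ isCompOff G Y A then 1 else 0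



section Aux
variable {V : Type*} [Fintype V] [DecidableEq V] (G : SimpleGraph V) [DecidableRel G.Adj]

def goodSet (Y A : Finset V) : Prop :=
  (∃ y ∈ Y, A = {y}) ∨ isCompOff G Y A

lemma good_unique {Y A A' : Finset V} {x : V} (hA : goodSet G Y A) (hA' : goodSet G Y A')
    (hx : x ∈ A) (hx' : x ∈ A') : A = A' := by
  have comp_notY : ∀ {B : Finset V}, isCompOff G Y B → ∀ {z : V}, z ∈ B → z ∉ Y := by
    rintro B ⟨c, hc⟩ z hz
    have : (z : V) ∈ (↑B : Set V) := hz
    rw [hc] at this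
    obtain ⟨v, _, rfl⟩ := this
    exact fun h => v.2 (Finset.mem_coe.mpr h)
  rcases hA with ⟨y, hy, rfl⟩ | ⟨c, hc⟩ <;> rcases hA' with ⟨y', hy', rfl⟩ | h'
  · simp_all
  · exact absurd hy (by simpa [Finset.mem_singleton.mp hx] using comp_notY h' hx')
  · exact absurd hy' (by simpa [Finset.mem_singleton.mp hx'] using comp_notY ⟨c, hc⟩ hx)
  · obtain ⟨c', hc'⟩ := h'
    apply Finset.coe_injective
    rw [hc, hc']
    have hx1 : (x : V) ∈ (↑A : Set V) := hx
    have hx2 : (x : V) ∈ (↑A' : Set V) := hx'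
    rw [hc] at hx1; rw [hc'] at hx2
    obtain ⟨v, hv, rfl⟩ := hx1
    obtain ⟨v', hv', hvv⟩ := hx2
    have : v' = v := Subtype.ext hvv
    subst this
    rw [SimpleGraph.ConnectedComponent.mem_supp_iff] at hv hv'
    rw [← hv, ← hv']

lemma good_witness {Y A : Finset V} {x : V} (hA : goodSet G Y A)
    (hx : x ∈ innerBoundary G A) : ∃ y, (y = x ∨ G.Adj x y) ∧ y ∈ Y := by
  obtain ⟨hxA, w, hwA, hadj⟩ := by simpa [innerBoundary] using hx
  rcases hA with ⟨y, hy, rfl⟩ | ⟨c, hc⟩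
  · exact ⟨y, Or.inl ((Finset.mem_singleton.mp hxA).symm), hy⟩
  · by_cases hwY : w ∈ Y
    · exact ⟨w, Or.inr hadj, hwY⟩
    · exfalso
      have hxA' : (x : V) ∈ (↑A : Set V) := hxA
      rw [hc] at hxA'
      obtain ⟨v, hv, hvx⟩ := hxA'
      have hwmem : w ∈ ((↑Y : Set V)ᶜ) := by simpa using hwY
      have hadj' : (G.induce ((↑Y : Set V)ᶜ)).Adj v ⟨w, hwmem⟩ := by
        simp [SimpleGraph.comap, hvx, hadj]
      have h1 : (⟨w, hwmem⟩ : ((↑Y : Set V)ᶜ : Set V)) ∈ c.supp := by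
        rw [SimpleGraph.ConnectedComponent.mem_supp_iff] at hv ⊢
        rw [← hv]
        exact (SimpleGraph.ConnectedComponent.sound hadj'.symm.reachable)
      have : w ∈ (↑A : Set V) := by rw [hc]; exact ⟨_, h1, rfl⟩
      exact hwA this

open Classical in
lemma PhiY_eq (Y A : Finset V) :
    PhiY G Y A = if goodSet G Y A then 1 else 0 := by
  unfold goodSet PhiY
  congr

lemma sum_boundary_le (Y : Finset V) (x : V) :
    ∑ A ∈ univ.filter (fun A : Finset V => x ∈ innerBoundary G A), PhiY G Y A ≤
      ∑ y ∈ insert x (G.neighborFinset x), (if y ∈ Y then (1 : ℝ) else 0) := by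
  classical
  by_cases hex : ∃ A ∈ univ.filter (fun A : Finset V => x ∈ innerBoundary G A), goodSet G Y A
  · obtain ⟨A₀, hA₀mem, hA₀⟩ := hex
    have hxb : x ∈ innerBoundary G A₀ := (Finset.mem_filter.mp hA₀mem).2
    have hLHS : ∑ A ∈ univ.filter (fun A : Finset V => x ∈ innerBoundary G A), PhiY G Y A
        = PhiY G Y A₀ := by
      apply Finset.sum_eq_single A₀
      · intro A hA hne
        rw [PhiY_eq]
        split_ifs with h
        · exact absurd (good_unique G h hA₀
            (Finset.mem_filter.mp ((Finset.mem_filter.mp hA).2 : x ∈ innerBoundary G A)).1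
            (Finset.mem_filter.mp hxb).1) hne
        · rfl
      · intro h; exact absurd hA₀mem h
    obtain ⟨y, hy, hyY⟩ := good_witness G hA₀ hxb
    have hymem : y ∈ insert x (G.neighborFinset x) := by
      rcases hy with rfl | hadj
      · exact Finset.mem_insert_self _ _
      · exact Finset.mem_insert_of_mem (by simpa using hadj)
    have h1 : (1 : ℝ) ≤ ∑ y ∈ insert x (G.neighborFinset x), (if y ∈ Y then (1 : ℝ) else 0) := by
      have := Finset.single_le_sum (f := fun y => if y ∈ Y then (1 : ℝ) else 0)
        (fun i _ => by positivity) hymem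
      simpa [hyY] using this
    rw [hLHS, PhiY_eq, if_pos hA₀]
    exact h1
  · push_neg at hex
    have hLHS : ∑ A ∈ univ.filter (fun A : Finset V => x ∈ innerBoundary G A), PhiY G Y A = 0 := by
      apply Finset.sum_eq_zero
      intro A hA
      rw [PhiY_eq, if_neg (hex A hA)]
    rw [hLHS]
    exact Finset.sum_nonneg fun i _ => by positivity
end Aux


/-- For a convex combination `Φ = Σᵢ tᵢ Φ_{Yᵢ}` of `K`-partitions associated to
`K`-separators of a graph of maximum degree `d`,
`|{x : ∂Φ(x) ≥ ε}| ≤ (d+1)·|{x : Σ_{i : x ∈ Yᵢ} tᵢ ≥ ε/(d+1)}|`. -/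
theorem stmt11 {V : Type*} [Fintype V] [DecidableEq V]
    (G : SimpleGraph V) [DecidableRel G.Adj]
    (d K : ℕ) (hdeg : ∀ v, G.degree v ≤ d) (hK : 1 ≤ K)
    (n : ℕ) (Y : Fin n → Finset V)
    (hsep : ∀ i, ∀ c : (G.induce ((↑(Y i) : Set V)ᶜ)).ConnectedComponent,
      Nat.card c.supp ≤ K)
    (t : Fin n → ℝ) (ht0 : ∀ i, 0 ≤ t i) (ht1 : ∑ i, t i = 1)
    (ε : ℝ) (hε : 0 < ε) :
    ((univ.filter (fun x : V =>
        ε ≤ ∑ A ∈ univ.filter (fun A : Finset V => x ∈ innerBoundary G A),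
              ∑ i, t i * PhiY G (Y i) A)).card : ℝ) ≤
      (d + 1) *
        ((univ.filter (fun x : V =>
          ε / (d + 1) ≤ ∑ i ∈ univ.filter (fun i => x ∈ Y i), t i)).card : ℝ) := by
  classical
  set N : V → Finset V := fun x => insert x (G.neighborFinset x) with hN
  have hNcard : ∀ x, (N x).card ≤ d + 1 := by
    intro x
    calc (N x).card ≤ (G.neighborFinset x).card + 1 := Finset.card_insert_le _ _
      _ ≤ d + 1 := Nat.add_le_add_right (by rw [SimpleGraph.card_neighborFinset_eq_degree]; exact hdeg x) 1
  have key : ∀ x : V,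
      (∑ A ∈ univ.filter (fun A : Finset V => x ∈ innerBoundary G A),
          ∑ i, t i * PhiY G (Y i) A)
        ≤ ∑ y ∈ N x, ∑ i ∈ univ.filter (fun i => y ∈ Y i), t i := by
    intro x
    rw [Finset.sum_comm]
    calc ∑ i, ∑ A ∈ univ.filter (fun A : Finset V => x ∈ innerBoundary G A),
            t i * PhiY G (Y i) A
        ≤ ∑ i, ∑ y ∈ N x, t i * (if y ∈ Y i then (1:ℝ) else 0) := by
          refine Finset.sum_le_sum fun i _ => ?_
          rw [← Finset.mul_sum, ← Finset.mul_sum]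
          exact mul_le_mul_of_nonneg_left (sum_boundary_le G (Y i) x) (ht0 i)
      _ = ∑ y ∈ N x, ∑ i, t i * (if y ∈ Y i then (1:ℝ) else 0) := Finset.sum_comm
      _ = ∑ y ∈ N x, ∑ i ∈ univ.filter (fun i => y ∈ Y i), t i := by
          refine Finset.sum_congr rfl fun y _ => ?_
          rw [Finset.sum_filter]
          exact Finset.sum_congr rfl fun i _ => by split_ifs <;> simp
  set RHS := univ.filter (fun x : V =>
      ε / (d + 1) ≤ ∑ i ∈ univ.filter (fun i => x ∈ Y i), t i) with hRHS
  have hsub : (univ.filter (fun x : V =>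
        ε ≤ ∑ A ∈ univ.filter (fun A : Finset V => x ∈ innerBoundary G A),
              ∑ i, t i * PhiY G (Y i) A)) ⊆ RHS.biUnion N := by
    intro x hx
    rw [Finset.mem_filter] at hx
    have hεsum : ε ≤ ∑ y ∈ N x, ∑ i ∈ univ.filter (fun i => y ∈ Y i), t i :=
      le_trans hx.2 (key x)
    have hne : (N x).Nonempty := ⟨x, Finset.mem_insert_self _ _⟩
    have hcsum : ∑ _y ∈ N x, (ε / (d + 1)) ≤
        ∑ y ∈ N x, ∑ i ∈ univ.filter (fun i => y ∈ Y i), t i := by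
      refine le_trans ?_ hεsum
      rw [Finset.sum_const, nsmul_eq_mul]
      have h1 : ((N x).card : ℝ) ≤ (d : ℝ) + 1 := by exact_mod_cast hNcard x
      have hd1 : (0:ℝ) < (d:ℝ) + 1 := by positivity
      calc ((N x).card : ℝ) * (ε / (d + 1)) ≤ ((d:ℝ) + 1) * (ε / ((d:ℝ) + 1)) :=
            mul_le_mul_of_nonneg_right h1 (by positivity)
        _ = ε := by field_simp
    obtain ⟨y, hyN, hy⟩ := Finset.exists_le_of_sum_le hne hcsum
    rw [Finset.mem_biUnion]
    refine ⟨y, Finset.mem_filter.mpr ⟨Finset.mem_univ _, hy⟩, ?_⟩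
    rcases Finset.mem_insert.mp hyN with rfl | hmem
    · exact Finset.mem_insert_self _ _
    · have hadj : G.Adj x y := by rwa [SimpleGraph.mem_neighborFinset] at hmem
      exact Finset.mem_insert_of_mem ((G.mem_neighborFinset _ _).mpr hadj.symm)
  calc ((univ.filter (fun x : V =>
        ε ≤ ∑ A ∈ univ.filter (fun A : Finset V => x ∈ innerBoundary G A),
              ∑ i, t i * PhiY G (Y i) A)).card : ℝ)
      ≤ ((RHS.biUnion N).card : ℝ) := by exact_mod_cast Finset.card_le_card hsub
    _ ≤ ∑ y ∈ RHS, ((N y).card : ℝ) := by exact_mod_cast Finset.card_biUnion_le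
    _ ≤ ∑ _y ∈ RHS, ((d:ℝ) + 1) :=
        Finset.sum_le_sum fun y _ => by exact_mod_cast hNcard y
    _ = (d + 1) * (RHS.card : ℝ) := by rw [Finset.sum_const, nsmul_eq_mul, mul_comm]
end

section
/- Let G be a finite graph and suppose that for reals ε > 0 and integer K ≥ 1, every nonempty induced subgraph G[B] (B ⊆ V(G)) contains a nonempty subset A ⊆ B with |∂_B(A)| ≤ ε|A| and all connected components of G[A] of size at most K, where ∂_B(A) is the set of vertices of B∖A adjacent to A. Then there exists a set T ⊆ V(G) with |T| ≤ ε|V(G)| such that all components of G[V(G)∖T] have size at most K. -/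
open Finset

section Aux

variable {V : Type*} [Fintype V] [DecidableEq V]

lemma walk_mem_aux {G : SimpleGraph V} {S₁ S : Set V}
    (hclosed : ∀ a b : V, a ∈ S₁ → b ∈ S → G.Adj a b → b ∈ S₁) :
    ∀ {x y : ↥S} (_ : (G.induce S).Walk x y) (hy : (y : V) ∈ S₁),
      ∃ hx : (x : V) ∈ S₁, (G.induce S₁).Reachable ⟨x, hx⟩ ⟨y, hy⟩ := by
  intro x y w
  induction w with
  | nil => intro hy; exact ⟨hy, SimpleGraph.Reachable.refl _⟩
  | @cons u z y h p ih =>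
    intro hy
    obtain ⟨hz, hr⟩ := ih hy
    have hadj : G.Adj (u : V) (z : V) := h
    have hx : (u : V) ∈ S₁ := hclosed (z : V) (u : V) hz u.2 hadj.symm
    have hadj₁ : (G.induce S₁).Adj ⟨u, hx⟩ ⟨z, hz⟩ := hadj
    exact ⟨hx, hadj₁.reachable.trans hr⟩

lemma comp_bound_aux {G : SimpleGraph V} {S₁ S : Set V} {K : ℕ}
    (hclosed : ∀ a b : V, a ∈ S₁ → b ∈ S → G.Adj a b → b ∈ S₁)
    (hK : ∀ c : (G.induce S₁).ConnectedComponent, Nat.card c.supp ≤ K)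
    (v : ↥S) (hv : (v : V) ∈ S₁) :
    Nat.card ((G.induce S).connectedComponentMk v).supp ≤ K := by
  classical
  set c := (G.induce S).connectedComponentMk v with hc
  set c₁ := (G.induce S₁).connectedComponentMk ⟨(v : V), hv⟩ with hc₁
  have key : ∀ x : ↥S, x ∈ c.supp → ∃ hx : (x : V) ∈ S₁,
      (⟨(x : V), hx⟩ : ↥S₁) ∈ c₁.supp := by
    intro x hx
    have hreach : (G.induce S).Reachable x v := by
      rw [SimpleGraph.ConnectedComponent.mem_supp_iff, hc,
        SimpleGraph.ConnectedComponent.eq] at hx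
      exact hx
    obtain ⟨w⟩ := hreach
    obtain ⟨h1, h2⟩ := walk_mem_aux hclosed w hv
    refine ⟨h1, ?_⟩
    rw [SimpleGraph.ConnectedComponent.mem_supp_iff, hc₁,
      SimpleGraph.ConnectedComponent.eq]
    exact h2
  refine le_trans (Nat.card_le_card_of_injective
    (fun x : ↥c.supp => (⟨⟨(x.1 : V), (key x.1 x.2).choose⟩,
      (key x.1 x.2).choose_spec⟩ : ↥c₁.supp)) ?_) (hK c₁)
  intro a b hab
  have h : ((a.1 : ↥S) : V) = ((b.1 : ↥S) : V) :=
    congrArg (fun z : ↥c₁.supp => ((z.1 : ↥S₁) : V)) hab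
  exact Subtype.ext (Subtype.ext h)

lemma main_lemma_aux {V : Type*} [Fintype V] [DecidableEq V]
    (G : SimpleGraph V) [DecidableRel G.Adj]
    (ε : ℝ) (K : ℕ) (hε : 0 < ε)
    (hloc : ∀ B : Finset V, B.Nonempty → ∃ A ⊆ B, A.Nonempty ∧
      (((B \ A).filter (fun x => ∃ y ∈ A, G.Adj x y)).card : ℝ) ≤ ε * A.card ∧
      (∀ c : (G.induce (↑A : Set V)).ConnectedComponent, Nat.card c.supp ≤ K)) :
    ∀ B : Finset V, ∃ T ⊆ B, (T.card : ℝ) ≤ ε * B.card ∧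
      ∀ c : (G.induce (↑(B \ T) : Set V)).ConnectedComponent, Nat.card c.supp ≤ K := by
  classical
  intro B
  induction B using Finset.strongInduction with
  | _ B ih =>
  by_cases hB : B.Nonempty
  · obtain ⟨A, hAB, hAne, hDcard, hAcomp⟩ := hloc B hB
    set D := (B \ A).filter (fun x => ∃ y ∈ A, G.Adj x y) with hD
    have hDBA : D ⊆ B \ A := filter_subset _ _
    set B' := B \ (A ∪ D) with hB'
    have hssub : B' ⊂ B := by
      rw [hB']
      refine Finset.ssubset_iff_of_subset (sdiff_subset) |>.2 ?_
      obtain ⟨a, ha⟩ := hAne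
      exact ⟨a, hAB ha, by simp [ha]⟩
    obtain ⟨T', hT'B', hT'card, hT'comp⟩ := ih B' hssub
    -- the removed set
    refine ⟨D ∪ T', ?_, ?_, ?_⟩
    · exact Finset.union_subset (hDBA.trans sdiff_subset) (hT'B'.trans (hB' ▸ sdiff_subset))
    · have h1 : ((D ∪ T').card : ℝ) ≤ (D.card : ℝ) + T'.card := by
        exact_mod_cast Finset.card_union_le D T'
      have hsum : (A.card : ℝ) + B'.card ≤ B.card := by
        have : (A ∪ B').card ≤ B.card :=
          Finset.card_le_card (Finset.union_subset hAB (hB' ▸ sdiff_subset))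
        have hd : Disjoint A B' := Finset.disjoint_left.2 (fun x hxA hxB' => by
          rw [hB', Finset.mem_sdiff, Finset.mem_union] at hxB'
          exact hxB'.2 (Or.inl hxA))
        rw [Finset.card_union_of_disjoint hd] at this
        exact_mod_cast this
      calc ((D ∪ T').card : ℝ) ≤ (D.card : ℝ) + T'.card := h1
        _ ≤ ε * A.card + ε * B'.card := add_le_add hDcard hT'card
        _ = ε * ((A.card : ℝ) + B'.card) := by ring
        _ ≤ ε * B.card := by
            exact mul_le_mul_of_nonneg_left hsum hε.le
    · -- components
      have hT'sub1 : ∀ x, x ∈ T' → x ∈ B ∧ x ∉ A ∧ x ∉ D := by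
        intro x hx
        have := hT'B' hx
        rw [hB', Finset.mem_sdiff, Finset.mem_union] at this
        tauto
      have hDsub : ∀ x, x ∈ D → x ∈ B ∧ x ∉ A := by
        intro x hx
        have := hDBA hx
        rw [Finset.mem_sdiff] at this
        exact this
      have hR : B \ (D ∪ T') = A ∪ (B' \ T') := by
        ext x
        simp only [Finset.mem_sdiff, Finset.mem_union, hB']
        constructor
        · rintro ⟨hxB, hn⟩
          push_neg at hn
          by_cases hxA : x ∈ A
          · exact Or.inl hxA
          · exact Or.inr ⟨⟨hxB, fun h => h.elim hxA hn.1⟩, hn.2⟩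
        · rintro (hxA | ⟨⟨hxB, hxn⟩, hxT'⟩)
          · exact ⟨hAB hxA, fun h => h.elim (fun hxD => (hDsub x hxD).2 hxA)
              (fun hxT => (hT'sub1 x hxT).2.1 hxA)⟩
          · exact ⟨hxB, fun h => h.elim (fun hxD => hxn (Or.inr hxD)) hxT'⟩
      intro c
      obtain ⟨v, hv⟩ := c.exists_rep
      subst hv
      have hvm : (v : V) ∈ B \ (D ∪ T') := by
        have := v.2
        simpa using this
      have hv2 : (v : V) ∈ A ∨ (v : V) ∈ B' \ T' := by
        rw [← Finset.mem_union, ← hR]; exact hvm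
      -- the two closure properties
      have hmemD : ∀ b : V, b ∈ B → b ∉ A → (∃ y ∈ A, G.Adj b y) → b ∈ D := by
        intro b hb hbA hadj
        rw [hD, Finset.mem_filter, Finset.mem_sdiff]
        exact ⟨⟨hb, hbA⟩, hadj⟩
      rcases hv2 with hvA | hvBT
      · -- v in A
        apply comp_bound_aux (S₁ := (↑A : Set V)) ?_ hAcomp v hvA
        intro a b ha hb hadj
        simp only [Finset.mem_coe] at ha ⊢
        by_contra hbA
        have hbR : b ∈ B \ (D ∪ T') := hb
        rw [hR, Finset.mem_union, Finset.mem_sdiff] at hbR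
        rcases hbR with h | ⟨hbB', hbT'⟩
        · exact hbA h
        · rw [hB', Finset.mem_sdiff, Finset.mem_union] at hbB'
          exact hbB'.2 (Or.inr (hmemD b hbB'.1 hbA ⟨a, ha, hadj.symm⟩))
      · -- v in B' \ T'
        apply comp_bound_aux (S₁ := (↑(B' \ T') : Set V)) ?_ hT'comp v (by
          simpa using hvBT)
        intro a b ha hb hadj
        simp only [Finset.coe_sdiff, Set.mem_diff, Finset.mem_coe] at ha ⊢
        have haB' := ha.1
        rw [hB', Finset.mem_sdiff, Finset.mem_union] at haB'
        push_neg at haB'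
        have hbR : b ∈ B \ (D ∪ T') := hb
        rw [hR, Finset.mem_union, Finset.mem_sdiff] at hbR
        rcases hbR with hbA | h
        · exact absurd (hmemD a haB'.1 haB'.2.1 ⟨b, hbA, hadj⟩) haB'.2.2
        · exact h
  · rw [Finset.not_nonempty_iff_eq_empty] at hB
    subst hB
    refine ⟨∅, Finset.Subset.refl _, by simp, ?_⟩
    intro c
    obtain ⟨v, -⟩ := c.exists_rep
    exact absurd v.2 (by simp)

end Aux

/-- Local hyperfiniteness implies hyperfiniteness for finite graphs: if every nonempty
induced subgraph `G[B]` contains a nonempty `A ⊆ B` with `|∂_B(A)| ≤ ε|A|` and all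
components of `G[A]` of size at most `K`, then there is `T` with `|T| ≤ ε|V|` such that
all components of `G − T` have size at most `K`. -/
theorem stmt15 {V : Type*} [Fintype V] [DecidableEq V]
    (G : SimpleGraph V) [DecidableRel G.Adj]
    (ε : ℝ) (K : ℕ) (hε : 0 < ε) (hK : 1 ≤ K)
    (hloc : ∀ B : Finset V, B.Nonempty → ∃ A ⊆ B, A.Nonempty ∧
      (((B \ A).filter (fun x => ∃ y ∈ A, G.Adj x y)).card : ℝ) ≤ ε * A.card ∧
      (∀ c : (G.induce (↑A : Set V)).ConnectedComponent, Nat.card c.supp ≤ K)) :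
    ∃ T : Finset V, (T.card : ℝ) ≤ ε * Fintype.card V ∧
      ∀ c : (G.induce ((↑T : Set V)ᶜ)).ConnectedComponent, Nat.card c.supp ≤ K := by
  obtain ⟨T, -, hcard, hcomp⟩ := main_lemma_aux G ε K hε hloc Finset.univ
  have hset : (↑(Finset.univ \ T) : Set V) = (↑T : Set V)ᶜ := by
    rw [Finset.coe_sdiff, Finset.coe_univ]
    exact (Set.compl_eq_univ_diff _).symm
  rw [hset] at hcomp
  refine ⟨T, ?_, hcomp⟩
  rwa [Finset.card_univ] at hcard
end
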